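/- arXiv:2306.03458 — 3 statements merged into one kernel-verified Lean document; each statement's English description precedes it below -/
import Mathlib

section
/- For the transfer function H(s) = (βs + α)/(s² + (ατ + β)s + α) with α > 0, β ≥ 0, τ ≥ 0, the condition |H(jω)| ≤ 1 for all ω ≥ 0 holds if and only if α²τ² + 2αβτ − 2α ≥ 0. -/
theorem l2_string_stability_iff (α β τ : ℝ) (hα : 0 < α) (hβ : 0 ≤ β) (hτ : 0 ≤ τ)
    (hden : ∀ ω : ℝ, 0 ≤ ω → (α - ω^2)^2 + ω^2 * (α*τ + β)^2 ≠ 0) :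
    (∀ ω : ℝ, 0 ≤ ω →
      Real.sqrt ((α^2 + β^2 * ω^2) / ((α - ω^2)^2 + ω^2 * (α*τ + β)^2)) ≤ 1) ↔
    α^2 * τ^2 + 2*α*β*τ - 2*α ≥ 0 := by
  have hdpos : ∀ ω : ℝ, 0 ≤ ω → 0 < (α - ω^2)^2 + ω^2 * (α*τ + β)^2 := by
    intro ω hω
    have h1 : 0 ≤ (α - ω^2)^2 + ω^2 * (α*τ + β)^2 := by positivity
    exact lt_of_le_of_ne h1 (Ne.symm (hden ω hω))
  constructor
  · intro h
    by_contra hc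
    push_neg at hc
    set c := α^2 * τ^2 + 2*α*β*τ - 2*α with hcdef
    have hcneg : c < 0 := hc
    set ω := Real.sqrt (-c/2) with hωdef
    have hω : 0 ≤ ω := Real.sqrt_nonneg _
    have hω2 : ω^2 = -c/2 := Real.sq_sqrt (by linarith)
    have hd := hdpos ω hω
    have hq := h ω hω
    have hnn : 0 ≤ (α^2 + β^2 * ω^2) / ((α - ω^2)^2 + ω^2 * (α*τ + β)^2) := by
      positivity
    have hle1 : (α^2 + β^2 * ω^2) / ((α - ω^2)^2 + ω^2 * (α*τ + β)^2) ≤ 1 := by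
      have := Real.mul_self_sqrt hnn
      nlinarith [Real.sqrt_nonneg ((α^2 + β^2 * ω^2) / ((α - ω^2)^2 + ω^2 * (α*τ + β)^2))]
    rw [div_le_one hd] at hle1
    nlinarith [hω2, hcneg]
  · intro hc ω hω
    have hd := hdpos ω hω
    have hnum : α^2 + β^2 * ω^2 ≤ (α - ω^2)^2 + ω^2 * (α*τ + β)^2 := by
      nlinarith [sq_nonneg ω, sq_nonneg (ω^2), mul_nonneg (sq_nonneg ω) hc]
    have : (α^2 + β^2 * ω^2) / ((α - ω^2)^2 + ω^2 * (α*τ + β)^2) ≤ 1 :=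
      (div_le_one hd).mpr hnum
    calc Real.sqrt ((α^2 + β^2 * ω^2) / ((α - ω^2)^2 + ω^2 * (α*τ + β)^2))
        ≤ Real.sqrt 1 := Real.sqrt_le_sqrt this
      _ = 1 := Real.sqrt_one
end

section
/- If α > 0, β ≥ 0, and τ satisfies ατ² + 2βτ ≥ 2 (equivalently α²τ² + 2αβτ − 2α ≥ 0), then for all ω ≥ 0, α² + β²ω² ≤ (α − ω²)² + ω²(ατ + β)². -/
theorem l2_core_inequality (α β τ : ℝ) (hα : 0 < α) (hβ : 0 ≤ β)
    (h : α * τ^2 + 2*β*τ ≥ 2) :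
    ∀ ω : ℝ, 0 ≤ ω → α^2 + β^2 * ω^2 ≤ (α - ω^2)^2 + ω^2 * (α*τ + β)^2 := by
  intro ω hω
  nlinarith [sq_nonneg ω, sq_nonneg (ω^2), mul_nonneg (mul_nonneg hα.le (sq_nonneg ω)) (sub_nonneg.2 h), sq_nonneg (α*τ+β)]
end

section
/- Under equilibrium driving conditions u = v and p = τv, the 5×5 nonlinear observability matrix O₂ of the augmented ACC system has rank 3, and its null space is spanned by the coordinate vectors e₃ = (0,0,1,0,0)ᵀ and e₄ = (0,0,0,1,0)ᵀ. -/
/-!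
At equilibrium the columns of `O₂` belonging to `α` and `β` vanish, so `e₃, e₄` lie in the kernel.
Rows 1, 4 and 5 read `ξ₁ = 0`, `ξ₂ = 0` and `αT ξ₁ − ατT ξ₂ − αvT ξ₅ = 0`, and `αvT ≠ 0`, so a
kernel vector has no other components. Rank–nullity then gives rank `5 − 2 = 3`.
-/

open Matrix

section SpanPairSingle

variable {K ι : Type*} [DecidableEq ι] {i j : ι}

theorem mem_span_pair_single_iff [Semiring K] (hij : i ≠ j) (x : ι → K) :
    x ∈ Submodule.span K {(Pi.single i 1 : ι → K), Pi.single j 1} ↔ ∀ k, k ≠ i → k ≠ j → x k = 0 := by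
  rw [Submodule.mem_span_pair]
  constructor
  · rintro ⟨a, b, rfl⟩ k hki hkj
    simp [hki, hkj]
  · intro hx
    refine ⟨x i, x j, funext fun k => ?_⟩
    by_cases hki : k = i
    · subst hki
      simp [hij]
    by_cases hkj : k = j
    · subst hkj
      simp [hki]
    simp [hki, hkj, hx k hki hkj]

theorem finrank_span_pair_single [Ring K] [Nontrivial K] [StrongRankCondition K] (hij : i ≠ j) :
    Module.finrank K (Submodule.span K {(Pi.single i 1 : ι → K), Pi.single j 1}) = 2 := by
  have hinj : Function.Injective ![i, j] := by
    simp [Function.Injective, Fin.forall_fin_two, hij, hij.symm]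
  have hli : LinearIndependent K ![(Pi.single i 1 : ι → K), Pi.single j 1] := by
    convert (Pi.linearIndependent_single_one ι K).comp _ hinj using 1
    ext k : 1
    fin_cases k <;> rfl
  rw [← Matrix.range_cons_cons_empty _ _ ![], finrank_span_eq_card hli, Fintype.card_fin]

end SpanPairSingle

theorem Matrix.rank_add_finrank_ker_mulVecLin {m n K : Type*} [Fintype n] [Field K]
    (A : Matrix m n K) : A.rank + Module.finrank K (LinearMap.ker A.mulVecLin) = Fintype.card n := by
  rw [Matrix.rank, LinearMap.finrank_range_add_finrank_ker, Module.finrank_fintype_fun_eq_card]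

/-- `O₂` for the state `ξ = (p, v, α, β, τ)`, with input `u` and sampling time `T`. -/
def accObservabilityMatrix (T p v u α β τ : ℝ) : Matrix (Fin 5) (Fin 5) ℝ :=
  !![1, 0, 0, 0, 0;
     1, -T, 0, 0, 0;
     1 - α*T^2, -2*T + (τ*α + β)*T^2, -(p - τ*v)*T^2, -(u - v)*T^2, α*v*T^2;
     0, 1, 0, 0, 0;
     α*T, -α*τ*T, (p - τ*v)*T, (u - v)*T, -α*v*T]

section Equilibrium

variable {T p v u α β τ : ℝ}

theorem accObservabilityMatrix_mulVec_of_equilibrium (hu : u = v) (hp : p = τ * v)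
    (x : Fin 5 → ℝ) :
    accObservabilityMatrix T p v u α β τ *ᵥ x =
      ![x 0, x 0 - T * x 1, (1 - α*T^2) * x 0 + (-2*T + (τ*α + β)*T^2) * x 1 + α*v*T^2 * x 4,
        x 1, α*T * x 0 - α*τ*T * x 1 - α*v*T * x 4] := by
  subst hu hp
  ext k
  fin_cases k <;> simp [accObservabilityMatrix, mulVec, dotProduct, Fin.sum_univ_five] <;> ring

theorem accObservabilityMatrix_mulVec_eq_zero_iff (hT : T ≠ 0) (hα : α ≠ 0) (hv : v ≠ 0)
    (hu : u = v) (hp : p = τ * v) (x : Fin 5 → ℝ) :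
    accObservabilityMatrix T p v u α β τ *ᵥ x = 0 ↔ x 0 = 0 ∧ x 1 = 0 ∧ x 4 = 0 := by
  rw [accObservabilityMatrix_mulVec_of_equilibrium hu hp]
  constructor
  · intro h
    have h0 : x 0 = 0 := congrFun h 0
    have h1 : x 1 = 0 := congrFun h 3
    have h4 : α*T * x 0 - α*τ*T * x 1 - α*v*T * x 4 = 0 := congrFun h 4
    rw [h0, h1] at h4
    refine ⟨h0, h1, ?_⟩
    have hαvT : α * v * T ≠ 0 := mul_ne_zero (mul_ne_zero hα hv) hT
    exact (mul_eq_zero.mp (by linarith : α * v * T * x 4 = 0)).resolve_left hαvT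
  · rintro ⟨h0, h1, h4⟩
    ext k
    fin_cases k <;> simp [h0, h1, h4]

theorem ker_accObservabilityMatrix_of_equilibrium (hT : T ≠ 0) (hα : α ≠ 0) (hv : v ≠ 0)
    (hu : u = v) (hp : p = τ * v) :
    LinearMap.ker (accObservabilityMatrix T p v u α β τ).mulVecLin =
      Submodule.span ℝ {Pi.single 2 1, Pi.single 3 1} := by
  ext x
  rw [LinearMap.mem_ker, mulVecLin_apply, accObservabilityMatrix_mulVec_eq_zero_iff hT hα hv hu hp,
    mem_span_pair_single_iff (by decide)]
  constructor
  · rintro ⟨h0, h1, h4⟩ k hk2 hk3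
    fin_cases k <;> simp_all
  · intro hx
    exact ⟨hx 0 (by decide) (by decide), hx 1 (by decide) (by decide), hx 4 (by decide) (by decide)⟩

end Equilibrium

theorem acc_observability_equilibrium (T p v u α β τ : ℝ)
    (hT : 0 < T) (hα : α ≠ 0) (hv : v ≠ 0)
    (hu : u = v) (hp : p = τ * v) :
    let O : Matrix (Fin 5) (Fin 5) ℝ :=
      !![1, 0, 0, 0, 0;
         1, -T, 0, 0, 0;
         1 - α*T^2, -2*T + (τ*α + β)*T^2, -(p - τ*v)*T^2, -(u - v)*T^2, α*v*T^2;
         0, 1, 0, 0, 0;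
         α*T, -α*τ*T, (p - τ*v)*T, (u - v)*T, -α*v*T]
    O.rank = 3 ∧
    LinearMap.ker O.mulVecLin =
      Submodule.span ℝ {(![0,0,1,0,0] : Fin 5 → ℝ), (![0,0,0,1,0] : Fin 5 → ℝ)} := by
  intro O
  have he₂ : (![0,0,1,0,0] : Fin 5 → ℝ) = Pi.single 2 1 := by
    ext k; fin_cases k <;> rfl
  have he₃ : (![0,0,0,1,0] : Fin 5 → ℝ) = Pi.single 3 1 := by
    ext k; fin_cases k <;> rfl
  have hker : LinearMap.ker O.mulVecLin = Submodule.span ℝ {Pi.single 2 1, Pi.single 3 1} :=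
    ker_accObservabilityMatrix_of_equilibrium hT.ne' hα hv hu hp
  refine ⟨?_, he₂ ▸ he₃ ▸ hker⟩
  have hrank := O.rank_add_finrank_ker_mulVecLin
  rw [hker, finrank_span_pair_single (by decide), Fintype.card_fin] at hrank
  omega
end
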